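/- arXiv:2408.06623 — 3 statements merged into one kernel-verified Lean document; each statement's English description precedes it below -/
import Mathlib

section
/- If f = h + conj(g) with h, g holomorphic on the unit disk, then for any circle C of center z₀, radius ρ, contained in 𝔻, ∫₀^{2π} |f(z₀ + ρe^{it})|² dt = ∫₀^{2π} |h(z₀ + ρe^{it})|² dt + ∫₀^{2π} |g(z₀ + ρe^{it})|² dt + 4π Re(h(z₀) g(z₀)). -/
/-!
Pointwise, `‖h + conj g‖² = ‖h‖² + ‖g‖² + 2 Re (h g)`. Averaging over the circle, the first two
terms stay as they are, while `h g` is holomorphic, so by the mean value property the average of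
`Re (h g)` is `Re (h z₀ g z₀)`.
-/

open Complex Metric intervalIntegral
open scoped Real ComplexConjugate

theorem Complex.sq_norm_add_conj (a b : ℂ) :
    ‖a + conj b‖ ^ 2 = ‖a‖ ^ 2 + ‖b‖ ^ 2 + 2 * (a * b).re := by
  simp only [← normSq_eq_norm_sq, normSq_add, normSq_conj, conj_conj]

theorem Real.two_pi_mul_circleAverage (f : ℂ → ℝ) (c : ℂ) (R : ℝ) :
    2 * π * Real.circleAverage f c R = ∫ θ in 0..2 * π, f (circleMap c R θ) := by
  rw [circleAverage_def, smul_eq_mul, ← mul_assoc, mul_inv_cancel₀ two_pi_pos.ne', one_mul]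

section

variable {c : ℂ} {R : ℝ}

theorem DiffContOnCl.continuousOn_sphere {E : Type*} [NormedAddCommGroup E] [NormedSpace ℂ E]
    {f : ℂ → E} (hf : DiffContOnCl ℂ f (ball c |R|)) : ContinuousOn f (sphere c |R|) :=
  hf.continuousOn_ball.mono sphere_subset_closedBall

theorem DiffContOnCl.circleAverage_re {f : ℂ → ℂ} (hf : DiffContOnCl ℂ f (ball c |R|)) :
    Real.circleAverage (fun z => (f z).re) c R = (f c).re := by
  have := reCLM.circleAverage_comp_comm hf.continuousOn_sphere.circleIntegrable'
  rwa [hf.circleAverage] at this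

theorem DiffContOnCl.circleAverage_sq_norm_add_conj {h g : ℂ → ℂ}
    (hh : DiffContOnCl ℂ h (ball c |R|)) (hg : DiffContOnCl ℂ g (ball c |R|)) :
    Real.circleAverage (fun z => ‖h z + conj (g z)‖ ^ 2) c R =
      Real.circleAverage (fun z => ‖h z‖ ^ 2) c R + Real.circleAverage (fun z => ‖g z‖ ^ 2) c R +
        2 * (h c * g c).re := by
  have hhc := hh.continuousOn_sphere
  have hgc := hg.continuousOn_sphere
  have hmean : Real.circleAverage (fun z => 2 * (h z * g z).re) c R = 2 * (h c * g c).re := by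
    simpa only [smul_eq_mul] using
      (Real.circleAverage_fun_smul (a := (2 : ℝ))).trans (congrArg _ (hh.smul hg).circleAverage_re)
  simp_rw [Complex.sq_norm_add_conj]
  rw [Real.circleAverage_fun_add, Real.circleAverage_fun_add, hmean] <;>
    exact ContinuousOn.circleIntegrable' (by fun_prop)

end

/-- For `f = h + conj g` with `h, g` holomorphic on the unit disk and a circle of center
`z₀`, radius `ρ`, contained in the disk:
`∫₀^{2π} |f|² dt = ∫₀^{2π} |h|² dt + ∫₀^{2π} |g|² dt + 4π Re(h(z₀) g(z₀))`. -/
theorem stmt7 (h g f : ℂ → ℂ)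
    (hh : DifferentiableOn ℂ h (ball (0 : ℂ) 1))
    (hg : DifferentiableOn ℂ g (ball (0 : ℂ) 1))
    (hf : ∀ z ∈ ball (0 : ℂ) 1, f z = h z + (starRingEnd ℂ) (g z))
    (z₀ : ℂ) (ρ : ℝ) (hρ : 0 < ρ) (hsub : closedBall z₀ ρ ⊆ ball (0 : ℂ) 1) :
    ∫ t in (0 : ℝ)..(2 * π),
        ‖f (z₀ + (ρ : ℂ) * Complex.exp ((t : ℂ) * I))‖ ^ 2 =
      (∫ t in (0 : ℝ)..(2 * π),
        ‖h (z₀ + (ρ : ℂ) * Complex.exp ((t : ℂ) * I))‖ ^ 2) +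
      (∫ t in (0 : ℝ)..(2 * π),
        ‖g (z₀ + (ρ : ℂ) * Complex.exp ((t : ℂ) * I))‖ ^ 2) +
      4 * π * (h z₀ * g z₀).re := by
  rw [← abs_of_pos hρ] at hsub
  have hcircle : Set.EqOn f (fun z => h z + conj (g z)) (sphere z₀ |ρ|) :=
    fun z hz => hf z (hsub (sphere_subset_closedBall hz))
  have hsq := congrArg (2 * π * ·)
    ((hh.diffContOnCl_ball hsub).circleAverage_sq_norm_add_conj (hg.diffContOnCl_ball hsub))
  rw [← Real.circleAverage_congr_sphere (f₁ := fun z => ‖f z‖ ^ 2)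
    fun z hz => by simp only [hcircle hz]] at hsq
  simp only [mul_add, Real.two_pi_mul_circleAverage, circleMap] at hsq
  linear_combination hsq
end

section
/- For nonnegative real sequences (a_n), (b_n) with Σ(a_n² + b_n²) < ∞, the double series Σ_{k,l ≥ 0} (a_k a_l + b_k b_l + 2 a_k b_l)/(k + l + 1) is at most 2π Σ_{n≥0} (a_n² + b_n²). -/
open scoped Real

open Real Finset

private lemma arctan_diff_ge {p q : ℝ} (hpq : q ≤ p) :
    (p - q) / (Real.sqrt (1 + p ^ 2) * Real.sqrt (1 + q ^ 2)) ≤ arctan p - arctan q := by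
  have h1 : 0 ≤ arctan p - arctan q := sub_nonneg.2 (arctan_strictMono.monotone hpq)
  have h2 := Real.sin_le h1
  rw [Real.sin_sub, Real.sin_arctan, Real.cos_arctan, Real.sin_arctan, Real.cos_arctan] at h2
  have hp1 : (0:ℝ) < Real.sqrt (1 + p ^ 2) := Real.sqrt_pos.2 (by positivity)
  have hq1 : (0:ℝ) < Real.sqrt (1 + q ^ 2) := Real.sqrt_pos.2 (by positivity)
  have e : p / Real.sqrt (1 + p ^ 2) * (1 / Real.sqrt (1 + q ^ 2)) -
      1 / Real.sqrt (1 + p ^ 2) * (q / Real.sqrt (1 + q ^ 2)) =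
      (p - q) / (Real.sqrt (1 + p ^ 2) * Real.sqrt (1 + q ^ 2)) := by
    field_simp
  rw [e] at h2
  exact h2

set_option maxHeartbeats 1000000 in
private lemma key_core {s u v m : ℝ} (hs : 0 < s) (hm : 0 < m) (hu0 : 0 ≤ u) (hv : 0 < v)
    (huv : u < v) (hs1 : 1 ≤ s ^ 2) (hm1 : 1 ≤ m ^ 2)
    (hu2 : u ^ 2 = m ^ 2 - 1) (hv2 : v ^ 2 = m ^ 2 + 1) :
    s / ((s ^ 2 + m ^ 2) / 2 * m) ≤ 2 * (arctan (v / s) - arctan (u / s)) := by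
  have hpq : u / s ≤ v / s := by gcongr
  have H := arctan_diff_ge hpq
  have e1v : Real.sqrt (s ^ 2 + v ^ 2) = Real.sqrt (1 + (v / s) ^ 2) * s := by
    have h : s ^ 2 + v ^ 2 = (1 + (v / s) ^ 2) * s ^ 2 := by
      field_simp
    rw [h, Real.sqrt_mul (by positivity), Real.sqrt_sq hs.le]
  have e1u : Real.sqrt (s ^ 2 + u ^ 2) = Real.sqrt (1 + (u / s) ^ 2) * s := by
    have h : s ^ 2 + u ^ 2 = (1 + (u / s) ^ 2) * s ^ 2 := by
      field_simp
    rw [h, Real.sqrt_mul (by positivity), Real.sqrt_sq hs.le]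
  have e4 : (s ^ 2 + v ^ 2) * (s ^ 2 + u ^ 2) = (s ^ 2 + m ^ 2) ^ 2 - 1 := by
    rw [hu2, hv2]; ring
  have e6 : Real.sqrt ((s ^ 2 + m ^ 2) ^ 2 - 1)
      = (Real.sqrt (1 + (v / s) ^ 2) * Real.sqrt (1 + (u / s) ^ 2)) * s ^ 2 := by
    rw [← e4, Real.sqrt_mul (by positivity : (0:ℝ) ≤ s ^ 2 + v ^ 2), e1v, e1u]; ring
  have hRpos : 0 < Real.sqrt ((s ^ 2 + m ^ 2) ^ 2 - 1) := by
    apply Real.sqrt_pos.2; nlinarith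
  have huvsq : (u * v) ^ 2 = m ^ 2 * m ^ 2 - 1 := by
    rw [mul_pow, hu2, hv2]; ring
  have huvnn : 0 ≤ u * v := mul_nonneg hu0 hv.le
  have huvm : u * v ≤ m ^ 2 := by nlinarith
  have hE : 1 ≤ 2 * m ^ 2 * (m ^ 2 - u * v) := by nlinarith [sq_nonneg (m ^ 2 - u * v)]
  have hvu2 : (v - u) ^ 2 = 2 * m ^ 2 - 2 * (u * v) := by
    rw [sub_sq, hu2, hv2]; ring
  have e5 : Real.sqrt ((s ^ 2 + m ^ 2) ^ 2 - 1) ≤ (v - u) * m * (s ^ 2 + m ^ 2) := by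
    have h1 : (s ^ 2 + m ^ 2) ^ 2 - 1 ≤ ((v - u) * m * (s ^ 2 + m ^ 2)) ^ 2 := by
      have h2 : ((v - u) * m * (s ^ 2 + m ^ 2)) ^ 2
          = (2 * m ^ 2 * (m ^ 2 - u * v)) * (s ^ 2 + m ^ 2) ^ 2 := by
        rw [mul_pow, mul_pow, hvu2]; ring
      rw [h2]
      nlinarith [hE, sq_nonneg (s ^ 2 + m ^ 2)]
    calc Real.sqrt ((s ^ 2 + m ^ 2) ^ 2 - 1)
        ≤ Real.sqrt (((v - u) * m * (s ^ 2 + m ^ 2)) ^ 2) := Real.sqrt_le_sqrt h1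
      _ = (v - u) * m * (s ^ 2 + m ^ 2) :=
          Real.sqrt_sq (mul_nonneg (mul_nonneg (by linarith) hm.le) (by positivity))
  have e7 : (v / s - u / s) / (Real.sqrt (1 + (v / s) ^ 2) * Real.sqrt (1 + (u / s) ^ 2))
      = s * (v - u) / Real.sqrt ((s ^ 2 + m ^ 2) ^ 2 - 1) := by
    have h1 : Real.sqrt (1 + (v / s) ^ 2) * Real.sqrt (1 + (u / s) ^ 2)
        = Real.sqrt ((s ^ 2 + m ^ 2) ^ 2 - 1) / s ^ 2 := by
      rw [e6]; field_simp
    rw [h1]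
    field_simp
  rw [e7] at H
  have hmid : s / ((s ^ 2 + m ^ 2) / 2 * m)
      ≤ 2 * (s * (v - u) / Real.sqrt ((s ^ 2 + m ^ 2) ^ 2 - 1)) := by
    have h2 : (0:ℝ) < (s ^ 2 + m ^ 2) / 2 * m := by positivity
    have h3 : 2 * (s * (v - u) / Real.sqrt ((s ^ 2 + m ^ 2) ^ 2 - 1))
        = 2 * s * (v - u) / Real.sqrt ((s ^ 2 + m ^ 2) ^ 2 - 1) := by ring
    rw [h3, div_le_div_iff₀ h2 hRpos]
    calc s * Real.sqrt ((s ^ 2 + m ^ 2) ^ 2 - 1)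
        ≤ s * ((v - u) * m * (s ^ 2 + m ^ 2)) := mul_le_mul_of_nonneg_left e5 hs.le
      _ = 2 * s * (v - u) * ((s ^ 2 + m ^ 2) / 2 * m) := by ring
  linarith

private lemma key_ineq (k l : ℕ) :
    Real.sqrt (2 * (k:ℝ) + 1) / (((k:ℝ) + l + 1) * Real.sqrt (2 * (l:ℝ) + 1)) ≤
      2 * (arctan (Real.sqrt (2 * (l:ℝ) + 2) / Real.sqrt (2 * (k:ℝ) + 1)) -
           arctan (Real.sqrt (2 * (l:ℝ)) / Real.sqrt (2 * (k:ℝ) + 1))) := by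
  have hs : 0 < Real.sqrt (2 * (k:ℝ) + 1) := Real.sqrt_pos.2 (by positivity)
  have hm : 0 < Real.sqrt (2 * (l:ℝ) + 1) := Real.sqrt_pos.2 (by positivity)
  have hv : 0 < Real.sqrt (2 * (l:ℝ) + 2) := Real.sqrt_pos.2 (by positivity)
  have hu0 : 0 ≤ Real.sqrt (2 * (l:ℝ)) := Real.sqrt_nonneg _
  have huv : Real.sqrt (2 * (l:ℝ)) < Real.sqrt (2 * (l:ℝ) + 2) :=
    Real.sqrt_lt_sqrt (by positivity) (by linarith)
  have s2 : Real.sqrt (2 * (k:ℝ) + 1) ^ 2 = 2 * (k:ℝ) + 1 := Real.sq_sqrt (by positivity)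
  have u2 : Real.sqrt (2 * (l:ℝ)) ^ 2 = 2 * (l:ℝ) := Real.sq_sqrt (by positivity)
  have v2 : Real.sqrt (2 * (l:ℝ) + 2) ^ 2 = 2 * (l:ℝ) + 2 := Real.sq_sqrt (by positivity)
  have m2 : Real.sqrt (2 * (l:ℝ) + 1) ^ 2 = 2 * (l:ℝ) + 1 := Real.sq_sqrt (by positivity)
  have h := key_core hs hm hu0 hv huv (by rw [s2]; have : (0:ℝ) ≤ (k:ℝ) := Nat.cast_nonneg k; linarith)
    (by rw [m2]; have : (0:ℝ) ≤ (l:ℝ) := Nat.cast_nonneg l; linarith)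
    (by rw [u2, m2]; ring) (by rw [v2, m2]; ring)
  have hkl : ((k:ℝ) + l + 1) =
      (Real.sqrt (2 * (k:ℝ) + 1) ^ 2 + Real.sqrt (2 * (l:ℝ) + 1) ^ 2) / 2 := by
    rw [s2, m2]; ring
  rw [hkl]
  exact h

private lemma inner_sum_le (k N : ℕ) :
    ∑ l ∈ Finset.range N,
      Real.sqrt (2 * (k:ℝ) + 1) / (((k:ℝ) + l + 1) * Real.sqrt (2 * (l:ℝ) + 1)) ≤ π := by
  set s := Real.sqrt (2 * (k:ℝ) + 1) with hs_def
  set f : ℕ → ℝ := fun l => 2 * arctan (Real.sqrt (2 * (l:ℝ)) / s) with hf_def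
  have hterm : ∀ l : ℕ, s / (((k:ℝ) + l + 1) * Real.sqrt (2 * (l:ℝ) + 1)) ≤ f (l + 1) - f l := by
    intro l
    have h := key_ineq k l
    have he : f (l + 1) - f l
        = 2 * (arctan (Real.sqrt (2 * (l:ℝ) + 2) / s) - arctan (Real.sqrt (2 * (l:ℝ)) / s)) := by
      simp only [hf_def]
      have h1 : ((l + 1 : ℕ) : ℝ) = (l:ℝ) + 1 := by push_cast; ring
      rw [h1, show 2 * ((l:ℝ) + 1) = 2 * (l:ℝ) + 2 from by ring]
      ring
    rw [he]
    exact h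
  calc ∑ l ∈ Finset.range N, s / (((k:ℝ) + l + 1) * Real.sqrt (2 * (l:ℝ) + 1))
      ≤ ∑ l ∈ Finset.range N, (f (l + 1) - f l) :=
        Finset.sum_le_sum fun l _ => hterm l
    _ = f N - f 0 := Finset.sum_range_sub f N
    _ ≤ π := by
        have h1 : f N < 2 * (π / 2) := by
          simp only [hf_def]
          have := arctan_lt_pi_div_two (Real.sqrt (2 * (N:ℝ)) / s)
          linarith
        have h2 : f 0 = 0 := by simp [hf_def]
        rw [h2]
        linarith

private lemma inner_sum_le' (l N : ℕ) :
    ∑ k ∈ Finset.range N,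
      Real.sqrt (2 * (l:ℝ) + 1) / (((k:ℝ) + l + 1) * Real.sqrt (2 * (k:ℝ) + 1)) ≤ π := by
  have h := inner_sum_le l N
  refine le_trans (le_of_eq (Finset.sum_congr rfl fun k _ => ?_)) h
  rw [add_comm (k:ℝ) (l:ℝ)]

private lemma point_core {x y sk sl d : ℝ} (hx : 0 ≤ x) (hy : 0 ≤ y)
    (hsk : 0 < sk) (hsl : 0 < sl) (hd : 0 < d) :
    x * y / d ≤ x ^ 2 / 2 * (sk / (d * sl)) + y ^ 2 / 2 * (sl / (d * sk)) := by
  have expand : x ^ 2 / 2 * (sk / (d * sl)) + y ^ 2 / 2 * (sl / (d * sk))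
      = (x ^ 2 * sk ^ 2 + y ^ 2 * sl ^ 2) / (2 * (d * (sk * sl))) := by
    field_simp
  rw [expand, div_le_div_iff₀ hd (by positivity)]
  nlinarith [mul_nonneg hd.le (sq_nonneg (x * sk - y * sl)), mul_pos hsk hsl]

private lemma box_bound (c : ℕ → ℝ) (hc : ∀ n, 0 ≤ c n) (N : ℕ) :
    ∑ k ∈ Finset.range N, ∑ l ∈ Finset.range N, c k * c l / ((k:ℝ) + l + 1)
      ≤ π * ∑ n ∈ Finset.range N, c n ^ 2 := by
  have point : ∀ k l : ℕ, c k * c l / ((k:ℝ) + l + 1) ≤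
      c k ^ 2 / 2 * (Real.sqrt (2 * (k:ℝ) + 1) / (((k:ℝ) + l + 1) * Real.sqrt (2 * (l:ℝ) + 1)))
       + c l ^ 2 / 2 * (Real.sqrt (2 * (l:ℝ) + 1) / (((k:ℝ) + l + 1) * Real.sqrt (2 * (k:ℝ) + 1))) := by
    intro k l
    exact point_core (hc k) (hc l) (Real.sqrt_pos.2 (by positivity))
      (Real.sqrt_pos.2 (by positivity)) (by positivity)
  calc ∑ k ∈ Finset.range N, ∑ l ∈ Finset.range N, c k * c l / ((k:ℝ) + l + 1)
      ≤ ∑ k ∈ Finset.range N, ∑ l ∈ Finset.range N,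
          (c k ^ 2 / 2 * (Real.sqrt (2 * (k:ℝ) + 1) / (((k:ℝ) + l + 1) * Real.sqrt (2 * (l:ℝ) + 1)))
           + c l ^ 2 / 2 * (Real.sqrt (2 * (l:ℝ) + 1) / (((k:ℝ) + l + 1) * Real.sqrt (2 * (k:ℝ) + 1)))) :=
        Finset.sum_le_sum fun k _ => Finset.sum_le_sum fun l _ => point k l
    _ = (∑ k ∈ Finset.range N, ∑ l ∈ Finset.range N,
          c k ^ 2 / 2 * (Real.sqrt (2 * (k:ℝ) + 1) / (((k:ℝ) + l + 1) * Real.sqrt (2 * (l:ℝ) + 1))))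
        + ∑ k ∈ Finset.range N, ∑ l ∈ Finset.range N,
          c l ^ 2 / 2 * (Real.sqrt (2 * (l:ℝ) + 1) / (((k:ℝ) + l + 1) * Real.sqrt (2 * (k:ℝ) + 1))) := by
        rw [← Finset.sum_add_distrib]
        exact Finset.sum_congr rfl fun k _ => Finset.sum_add_distrib
    _ ≤ (∑ k ∈ Finset.range N, c k ^ 2 / 2 * π) + ∑ l ∈ Finset.range N, c l ^ 2 / 2 * π := by
        have hA : (∑ k ∈ Finset.range N, ∑ l ∈ Finset.range N,
            c k ^ 2 / 2 * (Real.sqrt (2 * (k:ℝ) + 1) / (((k:ℝ) + l + 1) * Real.sqrt (2 * (l:ℝ) + 1))))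
            ≤ ∑ k ∈ Finset.range N, c k ^ 2 / 2 * π := by
          refine Finset.sum_le_sum fun k _ => ?_
          rw [← Finset.mul_sum]
          exact mul_le_mul_of_nonneg_left (inner_sum_le k N) (by positivity)
        have hswap := Finset.sum_comm (s := Finset.range N) (t := Finset.range N)
          (f := fun k l => c l ^ 2 / 2 *
            (Real.sqrt (2 * (l:ℝ) + 1) / (((k:ℝ) + l + 1) * Real.sqrt (2 * (k:ℝ) + 1))))
        have hB : (∑ k ∈ Finset.range N, ∑ l ∈ Finset.range N,
            c l ^ 2 / 2 * (Real.sqrt (2 * (l:ℝ) + 1) / (((k:ℝ) + l + 1) * Real.sqrt (2 * (k:ℝ) + 1))))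
            ≤ ∑ l ∈ Finset.range N, c l ^ 2 / 2 * π := by
          rw [hswap]
          refine Finset.sum_le_sum fun l _ => ?_
          rw [← Finset.mul_sum]
          exact mul_le_mul_of_nonneg_left (inner_sum_le' l N) (by positivity)
        exact add_le_add hA hB
    _ = π * ∑ n ∈ Finset.range N, c n ^ 2 := by
        rw [← Finset.sum_add_distrib]
        rw [Finset.mul_sum]
        exact Finset.sum_congr rfl fun n _ => by ring

/-- Hilbert-type inequality: for nonnegative square-summable sequences,
`Σ_{k,l} (a_k a_l + b_k b_l + 2 a_k b_l)/(k+l+1) ≤ 2π Σ (a_n² + b_n²)`. -/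
theorem stmt9 (a b : ℕ → ℝ) (ha : ∀ n, 0 ≤ a n) (hb : ∀ n, 0 ≤ b n)
    (hsum : Summable fun n => a n ^ 2 + b n ^ 2) :
    ∑' k : ℕ, ∑' l : ℕ,
        (a k * a l + b k * b l + 2 * a k * b l) / ((k : ℝ) + (l : ℝ) + 1) ≤
      2 * π * ∑' n : ℕ, (a n ^ 2 + b n ^ 2) := by
  set T := ∑' n : ℕ, (a n ^ 2 + b n ^ 2) with hT
  set F : ℕ × ℕ → ℝ := fun p =>
    (a p.1 * a p.2 + b p.1 * b p.2 + 2 * a p.1 * b p.2) / ((p.1 : ℝ) + (p.2 : ℝ) + 1) with hF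
  have hF0 : ∀ p : ℕ × ℕ, 0 ≤ F p := by
    intro p
    have h1 := ha p.1; have h2 := ha p.2; have h3 := hb p.1; have h4 := hb p.2
    have hd : (0:ℝ) < (p.1 : ℝ) + (p.2 : ℝ) + 1 := by positivity
    exact div_nonneg (by positivity) hd.le
  have hbox : ∀ N : ℕ, ∑ k ∈ Finset.range N, ∑ l ∈ Finset.range N, F (k, l) ≤ 2 * π * T := by
    intro N
    have hc : ∀ n, 0 ≤ a n + b n := fun n => add_nonneg (ha n) (hb n)
    have hnum : ∀ k l : ℕ, F (k, l)
        = (a k + b k) * (a l + b l) / ((k:ℝ) + l + 1)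
          + (a k * b l / ((k:ℝ) + l + 1) - a l * b k / ((k:ℝ) + l + 1)) := by
      intro k l
      have hd : ((k:ℝ) + l + 1) ≠ 0 := by positivity
      simp only [hF]
      field_simp
      ring
    have hswap : ∑ k ∈ Finset.range N, ∑ l ∈ Finset.range N, a k * b l / ((k:ℝ) + l + 1)
        = ∑ k ∈ Finset.range N, ∑ l ∈ Finset.range N, a l * b k / ((k:ℝ) + l + 1) := by
      rw [Finset.sum_comm]
      exact Finset.sum_congr rfl fun k _ => Finset.sum_congr rfl fun l _ => by
        rw [add_comm (l:ℝ) (k:ℝ)]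
    have hsplit : ∑ k ∈ Finset.range N, ∑ l ∈ Finset.range N, F (k, l)
        = ∑ k ∈ Finset.range N, ∑ l ∈ Finset.range N,
            (a k + b k) * (a l + b l) / ((k:ℝ) + l + 1) := by
      simp only [hnum, Finset.sum_add_distrib, Finset.sum_sub_distrib]
      rw [hswap]
      ring
    rw [hsplit]
    calc ∑ k ∈ Finset.range N, ∑ l ∈ Finset.range N,
          (a k + b k) * (a l + b l) / ((k:ℝ) + l + 1)
        ≤ π * ∑ n ∈ Finset.range N, (a n + b n) ^ 2 := box_bound _ hc N
      _ ≤ π * ∑ n ∈ Finset.range N, 2 * (a n ^ 2 + b n ^ 2) := by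
          apply mul_le_mul_of_nonneg_left _ Real.pi_pos.le
          exact Finset.sum_le_sum fun n _ => by nlinarith [sq_nonneg (a n - b n)]
      _ = 2 * π * ∑ n ∈ Finset.range N, (a n ^ 2 + b n ^ 2) := by
          rw [← Finset.mul_sum]; ring
      _ ≤ 2 * π * T := by
          apply mul_le_mul_of_nonneg_left _ (by positivity)
          exact Summable.sum_le_tsum (Finset.range N) (fun n _ => by positivity) hsum
  have hS : ∀ S : Finset (ℕ × ℕ), ∑ p ∈ S, F p ≤ 2 * π * T := by
    intro S
    set N : ℕ := (S.sup fun p => max p.1 p.2) + 1 with hN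
    have hsub : S ⊆ Finset.range N ×ˢ Finset.range N := by
      intro p hp
      have h1 : max p.1 p.2 ≤ S.sup fun p => max p.1 p.2 := Finset.le_sup (f := fun p : ℕ × ℕ => max p.1 p.2) hp
      refine Finset.mem_product.2 ⟨Finset.mem_range.2 ?_, Finset.mem_range.2 ?_⟩
      · exact Nat.lt_succ_of_le (le_trans (le_max_left _ _) h1)
      · exact Nat.lt_succ_of_le (le_trans (le_max_right _ _) h1)
    calc ∑ p ∈ S, F p ≤ ∑ p ∈ Finset.range N ×ˢ Finset.range N, F p :=
          Finset.sum_le_sum_of_subset_of_nonneg hsub fun p _ _ => hF0 p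
      _ = ∑ k ∈ Finset.range N, ∑ l ∈ Finset.range N, F (k, l) := by
          rw [Finset.sum_product]
      _ ≤ 2 * π * T := hbox N
  have hsF : Summable F := summable_of_sum_le (fun p => hF0 p) hS
  have heq : (∑' k : ℕ, ∑' l : ℕ,
      (a k * a l + b k * b l + 2 * a k * b l) / ((k : ℝ) + (l : ℝ) + 1))
      = ∑' p : ℕ × ℕ, F p := (Summable.tsum_prod' hsF fun n => hsF.prod_factor n).symm
  rw [heq]
  exact Summable.tsum_le_of_sum_le hsF hS
end

section
/- Let f = h + conj(g) where h(z) = Σ a_k z^k and g(z) = Σ b_k z^k are holomorphic on the unit disk with Σ(|a_k|² + |b_k|²) < ∞. Then ∫₀¹ (max_{|z| = r} |f(z)|)² dr ≤ 2π Σ_{n=0}^∞ (|a_n|² + |b_n|²). -/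
/-!
With `c k = ‖a k‖ + ‖b k‖` we have `|f| ≤ ∑ c k r ^ k` on the circle of radius `r`, so the
integral is at most `∫₀¹ (∑ c k r ^ k)² dr = ∑ j k, c j c k / (j + k + 1)`, which Hilbert's inequality
bounds by `π ∑ c k ² ≤ 2π ∑ (|a k|² + |b k|²)`. The computation is done in `ℝ≥0∞`, where sums and
integrals commute unconditionally. Hilbert's inequality is Schur's test with weights
`(2k + 1)^(-1/2)`: the required row bound compares `∑ k, (j + k + 1)⁻¹ (2k + 1)^(-1/2)` with the
integral of the same expression in `k`, whose primitive `2 arctan √((2k + 1)/(2j + 1)) / √(2j + 1)`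
stays below `π / √(2j + 1)`.
-/

open Complex Metric intervalIntegral MeasureTheory
open scoped Real ENNReal

theorem Real.div_one_add_sq_le_arctan {s : ℝ} (hs : 0 ≤ s) : s / (1 + s ^ 2) ≤ arctan s := by
  have hderiv : ∀ x : ℝ, HasDerivAt (fun t => arctan t - t / (1 + t ^ 2))
      (2 * x ^ 2 / (1 + x ^ 2) ^ 2) x := fun x => by
    have hsq : HasDerivAt (fun t : ℝ => 1 + t ^ 2) (2 * x) x := by
      simpa using (hasDerivAt_pow 2 x).const_add 1
    refine ((hasDerivAt_arctan x).sub ((hasDerivAt_id x).div hsq (by positivity))).congr_deriv ?_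
    simp only [id]
    field_simp
    ring
  have hmono : Monotone (fun t => arctan t - t / (1 + t ^ 2)) :=
    monotone_of_deriv_nonneg (fun x => (hderiv x).differentiableAt)
      fun x => (hderiv x).deriv ▸ by positivity
  simpa using hmono hs

theorem schur_test {ι : Type*} (s : Finset ι) (K : ι → ι → ℝ) (hK : ∀ j k, 0 ≤ K j k)
    (hK_symm : ∀ j k, K j k = K k j) (p : ι → ℝ) (hp : ∀ i, 0 < p i) {C : ℝ}
    (hKp : ∀ j ∈ s, ∑ k ∈ s, K j k * p k ≤ C * p j) (c : ι → ℝ) :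
    ∑ j ∈ s, ∑ k ∈ s, c j * c k * K j k ≤ C * ∑ j ∈ s, c j ^ 2 := by
  set X : ι → ι → ℝ := fun j k => c j ^ 2 * (p k / p j) * K j k
  have amgm : ∀ j k, c j * c k * K j k ≤ (X j k + X k j) / 2 := by
    intro j k
    have := hp j; have := hp k
    have h : c j * c k ≤ (c j ^ 2 * (p k / p j) + c k ^ 2 * (p j / p k)) / 2 := by
      field_simp
      nlinarith [sq_nonneg (c j * p k - c k * p j)]
    simpa only [X, hK_symm k j, ← add_mul, div_mul_eq_mul_div] using
      mul_le_mul_of_nonneg_right h (hK j k)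
  calc ∑ j ∈ s, ∑ k ∈ s, c j * c k * K j k
      ≤ ∑ j ∈ s, ∑ k ∈ s, (X j k + X k j) / 2 := by gcongr with j _ k _; exact amgm j k
    _ = ∑ j ∈ s, ∑ k ∈ s, X j k := by
        simp only [← Finset.sum_div, Finset.sum_add_distrib]
        rw [Finset.sum_comm (f := fun j k => X k j)]
        ring
    _ = ∑ j ∈ s, c j ^ 2 / p j * ∑ k ∈ s, K j k * p k := by
        refine Finset.sum_congr rfl fun j _ => ?_
        rw [Finset.mul_sum]
        refine Finset.sum_congr rfl fun k _ => ?_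
        ring
    _ ≤ ∑ j ∈ s, c j ^ 2 / p j * (C * p j) := by
        gcongr with j hj
        · exact div_nonneg (sq_nonneg _) (hp j).le
        · exact hKp j hj
    _ = C * ∑ j ∈ s, c j ^ 2 := by
        rw [Finset.mul_sum]
        refine Finset.sum_congr rfl fun j _ => ?_
        field_simp [(hp j).ne']

theorem AntitoneOn.sum_range_succ_le_add_sub {F A : ℝ → ℝ} (hF : AntitoneOn F (Set.Ici 0))
    (hA : ∀ x, 0 ≤ x → HasDerivAt A (F x) x) (n : ℕ) :
    ∑ k ∈ Finset.range (n + 1), F k ≤ F 0 + (A n - A 0) := by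
  have hIcc : Set.uIcc (0 : ℝ) n ⊆ Set.Ici 0 := by
    rw [Set.uIcc_of_le n.cast_nonneg]
    exact Set.Icc_subset_Ici_self
  have hsum := (hF.mono Set.Icc_subset_Ici_self).sum_le_integral (x₀ := 0) (a := n)
  rw [zero_add, integral_eq_sub_of_hasDerivAt (fun x hx => hA x (hIcc hx))
    (hF.mono hIcc).intervalIntegrable] at hsum
  simp only [zero_add] at hsum
  rw [Finset.sum_range_succ']
  push_cast at hsum ⊢
  linarith

theorem hasDerivAt_two_mul_inv_sqrt_mul_arctan {m x : ℝ} (hm : 0 < 2 * m + 1)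
    (hx : 0 < 2 * x + 1) :
    HasDerivAt (fun y => 2 * (√(2 * m + 1))⁻¹ * Real.arctan (√(2 * y + 1) / √(2 * m + 1)))
      ((m + x + 1)⁻¹ * (√(2 * x + 1))⁻¹) x := by
  have hsqrt : HasDerivAt (fun y : ℝ => √(2 * y + 1)) (2 / (2 * √(2 * x + 1))) x := by
    simpa using ((hasDerivAt_id x).const_mul 2).add_const 1 |>.sqrt hx.ne'
  refine (((hsqrt.div_const _).arctan).const_mul _).congr_deriv ?_
  have := Real.sqrt_pos.2 hm
  have := Real.sqrt_pos.2 hx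
  have : 0 < m + x + 1 := by linarith
  field_simp
  rw [Real.sq_sqrt hx.le, Real.sq_sqrt hm.le]
  ring

theorem sum_inv_add_mul_inv_sqrt_le (j : ℕ) (t : Finset ℕ) :
    ∑ k ∈ t, ((j : ℝ) + k + 1)⁻¹ * (√(2 * k + 1))⁻¹ ≤ π * (√(2 * j + 1))⁻¹ := by
  set M : ℝ := 2 * j + 1
  have hM : 0 < √M := Real.sqrt_pos.2 (by positivity)
  set F : ℝ → ℝ := fun x => ((j : ℝ) + x + 1)⁻¹ * (√(2 * x + 1))⁻¹
  set A : ℝ → ℝ := fun x => 2 * (√M)⁻¹ * Real.arctan (√(2 * x + 1) / √M)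
  have hF_anti : AntitoneOn F (Set.Ici 0) := by
    intro x hx y hy hxy
    simp only [Set.mem_Ici] at hx hy
    dsimp only [F]
    gcongr
  have hA_le : ∀ x, A x ≤ π * (√M)⁻¹ := fun x => by
    have := Real.arctan_lt_pi_div_two (√(2 * x + 1) / √M)
    dsimp only [A]
    nlinarith [inv_pos.2 hM]
  -- the integral comparison only covers the terms `k ≥ 1`
  have hF_zero : F 0 ≤ A 0 := by
    have h := Real.div_one_add_sq_le_arctan (inv_nonneg.2 hM.le)
    have h2 : √M ^ 2 = M := Real.sq_sqrt (by positivity)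
    dsimp only [F, A]
    rw [mul_zero, zero_add, Real.sqrt_one, inv_one, mul_one, one_div]
    calc ((j : ℝ) + 0 + 1)⁻¹ = 2 * (√M)⁻¹ * ((√M)⁻¹ / (1 + (√M)⁻¹ ^ 2)) := by
          field_simp
          rw [h2]
          ring
      _ ≤ 2 * (√M)⁻¹ * Real.arctan (√M)⁻¹ := by gcongr
  set n := t.sup id
  calc ∑ k ∈ t, ((j : ℝ) + k + 1)⁻¹ * (√(2 * k + 1))⁻¹
      ≤ ∑ k ∈ Finset.range (n + 1), F k :=
        Finset.sum_le_sum_of_subset_of_nonneg (Finset.subset_range_sup_succ t)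
          fun k _ _ => by positivity
    _ ≤ F 0 + (A n - A 0) := hF_anti.sum_range_succ_le_add_sub
        (fun x hx => hasDerivAt_two_mul_inv_sqrt_mul_arctan (by positivity) (by positivity)) n
    _ ≤ π * (√M)⁻¹ := by linarith [hA_le n]

theorem hilbert_inequality_finset (t : Finset ℕ) (c : ℕ → ℝ) :
    ∑ j ∈ t, ∑ k ∈ t, c j * c k / ((j : ℝ) + k + 1) ≤ π * ∑ j ∈ t, c j ^ 2 := by
  simp only [div_eq_mul_inv]
  exact schur_test t (fun j k => ((j : ℝ) + k + 1)⁻¹) (fun j k => by positivity)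
    (fun j k => by ring_nf) (fun k => (√(2 * k + 1))⁻¹) (fun k => by positivity)
    (fun j _ => sum_inv_add_mul_inv_sqrt_le j t) c

theorem hilbert_inequality_ennreal (c : ℕ → ℝ) (hc : ∀ k, 0 ≤ c k) :
    ∑' j, ∑' k, ENNReal.ofReal (c j * c k / ((j : ℝ) + k + 1)) ≤
      ENNReal.ofReal π * ∑' k, ENNReal.ofReal (c k ^ 2) := by
  rw [← ENNReal.tsum_prod, ENNReal.tsum_eq_iSup_sum]
  refine iSup_le fun s => ?_
  set t := s.image Prod.fst ∪ s.image Prod.snd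
  have hst : s ⊆ t ×ˢ t := s.subset_product.trans
    (Finset.product_subset_product Finset.subset_union_left Finset.subset_union_right)
  calc ∑ q ∈ s, ENNReal.ofReal (c q.1 * c q.2 / ((q.1 : ℝ) + q.2 + 1))
      ≤ ∑ q ∈ t ×ˢ t, ENNReal.ofReal (c q.1 * c q.2 / ((q.1 : ℝ) + q.2 + 1)) :=
        Finset.sum_le_sum_of_subset hst
    _ = ENNReal.ofReal (∑ j ∈ t, ∑ k ∈ t, c j * c k / ((j : ℝ) + k + 1)) := by
        rw [Finset.sum_product, ENNReal.ofReal_sum_of_nonneg fun j _ =>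
          Finset.sum_nonneg fun k _ => by have := hc j; have := hc k; positivity]
        refine Finset.sum_congr rfl fun j _ => ?_
        rw [ENNReal.ofReal_sum_of_nonneg fun k _ => by have := hc j; have := hc k; positivity]
    _ ≤ ENNReal.ofReal (π * ∑ j ∈ t, c j ^ 2) :=
        ENNReal.ofReal_le_ofReal (hilbert_inequality_finset t c)
    _ ≤ ENNReal.ofReal π * ∑' k, ENNReal.ofReal (c k ^ 2) := by
        rw [ENNReal.ofReal_mul Real.pi_nonneg, ENNReal.ofReal_sum_of_nonneg fun k _ => sq_nonneg _]
        gcongr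
        exact ENNReal.sum_le_tsum t

theorem lintegral_Ioo_ofReal_pow (n : ℕ) :
    ∫⁻ r in Set.Ioo (0 : ℝ) 1, ENNReal.ofReal r ^ n = ENNReal.ofReal ((n : ℝ) + 1)⁻¹ := by
  have h_pow : ∀ᵐ r ∂volume.restrict (Set.Ioo (0 : ℝ) 1),
      ENNReal.ofReal r ^ n = ENNReal.ofReal (r ^ n) := by
    filter_upwards [ae_restrict_mem measurableSet_Ioo] with r hr
    exact (ENNReal.ofReal_pow hr.1.le n).symm
  have h_int : IntegrableOn (fun r : ℝ => r ^ n) (Set.Ioo 0 1) :=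
    (continuous_pow n).integrableOn_Icc.mono_set Set.Ioo_subset_Icc_self
  rw [lintegral_congr_ae h_pow, ← ofReal_integral_eq_lintegral_ofReal h_int
    (ae_restrict_of_forall_mem measurableSet_Ioo fun r hr => pow_nonneg hr.1.le n),
    ← integral_Ioc_eq_integral_Ioo, ← integral_of_le zero_le_one, integral_pow]
  simp

theorem lintegral_sq_tsum_mul_pow (d : ℕ → ℝ≥0∞) :
    ∫⁻ r in Set.Ioo (0 : ℝ) 1, (∑' k, d k * ENNReal.ofReal r ^ k) ^ 2 =
      ∑' j, ∑' k, d j * d k * ENNReal.ofReal ((j : ℝ) + k + 1)⁻¹ := by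
  have hmeas : ∀ j k, Measurable fun r : ℝ => d j * d k * ENNReal.ofReal r ^ (j + k) :=
    fun j k => (ENNReal.measurable_ofReal.pow_const _).const_mul _
  have h_sq : ∀ r : ℝ, (∑' k, d k * ENNReal.ofReal r ^ k) ^ 2 =
      ∑' j, ∑' k, d j * d k * ENNReal.ofReal r ^ (j + k) := fun r => by
    rw [sq, ← ENNReal.tsum_mul_right]
    refine tsum_congr fun j => ?_
    rw [← ENNReal.tsum_mul_left]
    refine tsum_congr fun k => ?_
    ring
  simp_rw [h_sq]
  rw [lintegral_tsum fun j => (Measurable.tsum (hmeas j)).aemeasurable]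
  refine tsum_congr fun j => ?_
  rw [lintegral_tsum fun k => (hmeas j k).aemeasurable]
  refine tsum_congr fun k => ?_
  rw [lintegral_const_mul _ (ENNReal.measurable_ofReal.pow_const _), lintegral_Ioo_ofReal_pow]
  norm_cast

theorem lintegral_sq_tsum_ofReal_mul_pow_le (c : ℕ → ℝ) (hc : ∀ k, 0 ≤ c k) :
    ∫⁻ r in Set.Ioo (0 : ℝ) 1, (∑' k, ENNReal.ofReal (c k) * ENNReal.ofReal r ^ k) ^ 2 ≤
      ENNReal.ofReal π * ∑' k, ENNReal.ofReal (c k ^ 2) := by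
  rw [lintegral_sq_tsum_mul_pow]
  refine le_of_eq_of_le (tsum_congr fun j => tsum_congr fun k => ?_)
    (hilbert_inequality_ennreal c hc)
  rw [div_eq_mul_inv, ENNReal.ofReal_mul (mul_nonneg (hc j) (hc k)), ENNReal.ofReal_mul (hc j)]

theorem MeasureTheory.integral_le_of_lintegral_ofReal_le {α : Type*} [MeasurableSpace α]
    {μ : Measure α} {f : α → ℝ} (hf : 0 ≤ᵐ[μ] f) {C : ℝ} (hC : 0 ≤ C)
    (h : ∫⁻ x, ENNReal.ofReal (f x) ∂μ ≤ ENNReal.ofReal C) : ∫ x, f x ∂μ ≤ C := by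
  by_cases hm : AEStronglyMeasurable f μ
  · rw [integral_eq_lintegral_of_nonneg_ae hf hm]
    exact ENNReal.toReal_le_of_le_ofReal hC h
  · rwa [integral_non_aestronglyMeasurable hm]

theorem summable_norm_mul_pow_of_summable_sq {E : Type*} [SeminormedAddGroup E] {x : ℕ → E}
    (hx : Summable fun k => ‖x k‖ ^ 2) {r : ℝ} (hr₀ : 0 ≤ r) (hr₁ : r < 1) :
    Summable fun k => ‖x k‖ * r ^ k := by
  have hgeom : Summable fun k : ℕ => (r ^ k) ^ 2 := by
    refine (summable_geometric_of_lt_one (sq_nonneg r) (by nlinarith)).congr fun k => ?_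
    rw [← pow_mul, ← pow_mul, mul_comm]
  refine (hx.add hgeom).of_nonneg_of_le (fun k => by positivity) fun k => ?_
  nlinarith [sq_nonneg (‖x k‖ - r ^ k), norm_nonneg (x k), pow_nonneg hr₀ k]

theorem norm_tsum_mul_pow_le {𝕜 : Type*} [NormedDivisionRing 𝕜] {a : ℕ → 𝕜}
    (ha : Summable fun k => ‖a k‖ ^ 2) {z : 𝕜} (hz : ‖z‖ < 1) :
    ‖∑' k, a k * z ^ k‖ ≤ ∑' k, ‖a k‖ * ‖z‖ ^ k := by
  have hs : Summable fun k => ‖a k * z ^ k‖ := by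
    simpa only [norm_mul, norm_pow] using summable_norm_mul_pow_of_summable_sq ha (norm_nonneg z) hz
  exact (norm_tsum_le_tsum_norm hs).trans_eq (by simp only [norm_mul, norm_pow])

theorem norm_add_conj_tsum_mul_pow_le {a b : ℕ → ℂ} (ha : Summable fun k => ‖a k‖ ^ 2)
    (hb : Summable fun k => ‖b k‖ ^ 2) {z : ℂ} (hz : ‖z‖ < 1) :
    ‖(∑' k, a k * z ^ k) + (starRingEnd ℂ) (∑' k, b k * z ^ k)‖ ≤
      ∑' k, (‖a k‖ + ‖b k‖) * ‖z‖ ^ k := by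
  calc _ ≤ ‖∑' k, a k * z ^ k‖ + ‖∑' k, b k * z ^ k‖ := (norm_add_le _ _).trans_eq (by rw [norm_conj])
    _ ≤ ∑' k, ‖a k‖ * ‖z‖ ^ k + ∑' k, ‖b k‖ * ‖z‖ ^ k :=
        add_le_add (norm_tsum_mul_pow_le ha hz) (norm_tsum_mul_pow_le hb hz)
    _ = ∑' k, (‖a k‖ + ‖b k‖) * ‖z‖ ^ k := by
        rw [← Summable.tsum_add (summable_norm_mul_pow_of_summable_sq ha (norm_nonneg z) hz)
          (summable_norm_mul_pow_of_summable_sq hb (norm_nonneg z) hz)]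
        simp only [add_mul]

theorem ENNReal.ofReal_tsum_le_tsum_ofReal {α : Type*} {f : α → ℝ} (hf : ∀ i, 0 ≤ f i) :
    ENNReal.ofReal (∑' i, f i) ≤ ∑' i, ENNReal.ofReal (f i) := by
  by_cases hs : Summable f
  · exact (ENNReal.ofReal_tsum_of_nonneg hf hs).le
  · simp [tsum_eq_zero_of_not_summable hs]

theorem ofReal_sSup_norm_image_sphere_sq_le {a b : ℕ → ℂ}
    (hsum : Summable fun k => ‖a k‖ ^ 2 + ‖b k‖ ^ 2) {f : ℂ → ℂ}
    (hf : ∀ z ∈ ball (0 : ℂ) 1,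
      f z = (∑' k, a k * z ^ k) + (starRingEnd ℂ) (∑' k, b k * z ^ k))
    {r : ℝ} (hr₀ : 0 ≤ r) (hr₁ : r < 1) :
    ENNReal.ofReal (sSup ((fun z => ‖f z‖) '' sphere (0 : ℂ) r) ^ 2) ≤
      (∑' k, ENNReal.ofReal (‖a k‖ + ‖b k‖) * ENNReal.ofReal r ^ k) ^ 2 := by
  have ha : Summable fun k => ‖a k‖ ^ 2 :=
    hsum.of_nonneg_of_le (fun k => by positivity) fun k => le_add_of_nonneg_right (by positivity)
  have hb : Summable fun k => ‖b k‖ ^ 2 :=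
    hsum.of_nonneg_of_le (fun k => by positivity) fun k => le_add_of_nonneg_left (by positivity)
  have hsup_nonneg : 0 ≤ sSup ((fun z => ‖f z‖) '' sphere (0 : ℂ) r) :=
    Real.sSup_nonneg fun _ ⟨z, _, hz⟩ => hz ▸ norm_nonneg (f z)
  have hsup : sSup ((fun z => ‖f z‖) '' sphere (0 : ℂ) r) ≤ ∑' k, (‖a k‖ + ‖b k‖) * r ^ k := by
    refine Real.sSup_le ?_ (tsum_nonneg fun k => by positivity)
    rintro _ ⟨z, hz, rfl⟩
    rw [mem_sphere_zero_iff_norm] at hz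
    subst hz
    dsimp only
    rw [hf z (mem_ball_zero_iff.2 hr₁)]
    exact norm_add_conj_tsum_mul_pow_le ha hb hr₁
  rw [ENNReal.ofReal_pow hsup_nonneg]
  gcongr
  refine (ENNReal.ofReal_le_ofReal hsup).trans <|
    (ENNReal.ofReal_tsum_le_tsum_ofReal fun k => by positivity).trans_eq ?_
  simp_rw [ENNReal.ofReal_mul (add_nonneg (norm_nonneg _) (norm_nonneg _)), ENNReal.ofReal_pow hr₀]

/-- Maximal theorem: for `f = h + conj g` with square-summable coefficients,
`∫₀¹ (max_{|z|=r} |f(z)|)² dr ≤ 2π Σ (|a_n|² + |b_n|²)`. -/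
theorem stmt10 (a b : ℕ → ℂ)
    (hsum : Summable fun k => ‖a k‖ ^ 2 + ‖b k‖ ^ 2)
    (f : ℂ → ℂ)
    (hf : ∀ z ∈ ball (0 : ℂ) 1,
      f z = (∑' k : ℕ, a k * z ^ k) + (starRingEnd ℂ) (∑' k : ℕ, b k * z ^ k)) :
    ∫ r in (0 : ℝ)..1, (sSup ((fun z => ‖f z‖) '' sphere (0 : ℂ) r)) ^ 2 ≤
      2 * π * ∑' n : ℕ, (‖a n‖ ^ 2 + ‖b n‖ ^ 2) := by
  set c : ℕ → ℝ := fun k => ‖a k‖ + ‖b k‖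
  have h_coeff : ∑' k, ENNReal.ofReal (c k ^ 2) ≤
      ENNReal.ofReal (2 * ∑' n : ℕ, (‖a n‖ ^ 2 + ‖b n‖ ^ 2)) := by
    rw [← tsum_mul_left, ENNReal.ofReal_tsum_of_nonneg (fun k => by positivity) (hsum.mul_left 2)]
    exact ENNReal.tsum_le_tsum fun k => ENNReal.ofReal_le_ofReal add_sq_le
  rw [integral_of_le zero_le_one, integral_Ioc_eq_integral_Ioo]
  refine integral_le_of_lintegral_ofReal_le (ae_of_all _ fun r => sq_nonneg _) (by positivity) ?_
  calc ∫⁻ r in Set.Ioo (0 : ℝ) 1, ENNReal.ofReal (sSup ((fun z => ‖f z‖) '' sphere (0 : ℂ) r) ^ 2)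
      ≤ ∫⁻ r in Set.Ioo (0 : ℝ) 1, (∑' k, ENNReal.ofReal (c k) * ENNReal.ofReal r ^ k) ^ 2 :=
        setLIntegral_mono' measurableSet_Ioo fun r hr =>
          ofReal_sSup_norm_image_sphere_sq_le hsum hf hr.1.le hr.2
    _ ≤ ENNReal.ofReal π * ∑' k, ENNReal.ofReal (c k ^ 2) :=
        lintegral_sq_tsum_ofReal_mul_pow_le c fun k => by positivity
    _ ≤ ENNReal.ofReal (2 * π * ∑' n : ℕ, (‖a n‖ ^ 2 + ‖b n‖ ^ 2)) := by
        rw [mul_comm 2 π, mul_assoc, ENNReal.ofReal_mul Real.pi_nonneg]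
        gcongr
end
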